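/- arXiv:2109.07477 — 4 statements merged into one kernel-verified Lean document; each statement's English description precedes it below -/
import Mathlib

section
/- Let k₀ > 0, let p = (p₁, p₂, 0) ∈ ℝ³, and let F : ℝ² → ℂ be a continuous function whose (compact) support is contained in the open disk {(k₁,k₂) : k₁² + k₂² < k₀²}. Define g : ℝ² → ℂ³ by g(k₁,k₂) = (1/2)·F(k₁,k₂)·(p₁, p₂, (p₁k₁ + p₂k₂)/√(k₀² − k₁² − k₂²)), and for a fixed r₀ ∈ ℝ define the downward-propagating field E⁽⁰⁾ : ℝ³ → ℂ³ by E⁽⁰⁾(x) = (1/(4π²)) ∫_{ℝ²} g(k₁,k₂) e^{−i(k₁x₁ + k₂x₂)} e^{−i√(k₀²−k₁²−k₂²)(r₀−x₃)} d(k₁,k₂). Then E⁽⁰⁾ solves the homogeneous Helmholtz system: for every x ∈ ℝ³ and every component j ∈ {1,2,3}, ΔE⁽⁰⁾_j(x) + k₀² E⁽⁰⁾_j(x) = 0, and E⁽⁰⁾ is divergence-free: ∂E⁽⁰⁾₁/∂x₁ + ∂E⁽⁰⁾₂/∂x₂ + ∂E⁽⁰⁾₃/∂x₃ = 0. -/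
/-!
Up to the constant phase `e^{-i s(k) r₀}`, which is absorbed into the amplitude, `E⁽⁰⁾` is a
superposition `∫ b(k) e^{i ξ(k)·x} dk` of plane waves with wave vector
`ξ(k) = (-k₁, -k₂, s(k))`, `s(k) = √(k₀² - k₁² - k₂²)`. On the compact support of `F` the wave
vector is bounded, so one may differentiate under the integral sign, and each `∂ⱼ` multiplies the
amplitude by `i ξⱼ`. The Helmholtz equation then reduces to `|ξ|² = k₀²` and the divergence
condition to `ξ · g = 0`, both pointwise identities on the disk.

The one analytic point is the integrability of `g₃`, which carries the factor `1 / s(k)`: this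
function is integrable over the disk, since by Fubini each of its slices is
`t ↦ 1 / √(c - t²)` on `(-√c, √c)`, whose integral is `π` (a primitive is `arcsin (t / √c)`).
-/

open MeasureTheory

/-- Partial derivative of a complex-valued function on ℝ³ in the `i`-th coordinate
direction. -/
noncomputable def pd (f : (Fin 3 → ℝ) → ℂ) (i : Fin 3) (x : Fin 3 → ℝ) : ℂ :=
  fderiv ℝ f x (Pi.single i 1)

open Set Real Complex

theorem setOf_sq_lt_eq_Ioo (c : ℝ) : {t : ℝ | t ^ 2 < c} = Ioo (-√c) √c :=
  ext fun _ => sq_lt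

theorem hasDerivAt_arcsin_div_sqrt {c t : ℝ} (ht : t ∈ Ioo (-√c) √c) :
    HasDerivAt (fun s => arcsin (s / √c)) (√(c - t ^ 2))⁻¹ t := by
  have hc : 0 < c := sqrt_pos.1 (by linarith [ht.1, ht.2])
  have ha : 0 < √c := sqrt_pos.2 hc
  obtain ⟨h₁, h₂⟩ : -1 < t / √c ∧ t / √c < 1 := by
    rw [lt_div_iff₀ ha, div_lt_iff₀ ha, neg_one_mul, one_mul]; exact ht
  have hsqrt : √(c - t ^ 2) = √(1 - (t / √c) ^ 2) * √c := by
    rw [← sqrt_mul (by nlinarith), sub_mul, one_mul, div_pow, sq_sqrt hc.le,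
      div_mul_cancel₀ _ hc.ne']
  refine ((hasDerivAt_arcsin h₁.ne' h₂.ne).comp t ((hasDerivAt_id t).div_const √c)).congr_deriv ?_
  rw [hsqrt, mul_inv, one_div, one_div]

theorem intervalIntegrable_inv_sqrt_sub_sq (c : ℝ) :
    IntervalIntegrable (fun t => (√(c - t ^ 2))⁻¹) volume (-√c) √c :=
  intervalIntegral.intervalIntegrable_deriv_of_nonneg (g := fun s => arcsin (s / √c))
    (by fun_prop) (fun t ht => hasDerivAt_arcsin_div_sqrt (by simpa using ht))
    fun t _ => by positivity

theorem integrableOn_inv_sqrt_sub_sq (c : ℝ) :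
    IntegrableOn (fun t => (√(c - t ^ 2))⁻¹) {t | t ^ 2 < c} := by
  rw [setOf_sq_lt_eq_Ioo]
  exact ((intervalIntegrable_inv_sqrt_sub_sq c).1.mono_set Ioo_subset_Ioc_self)

theorem integral_inv_sqrt_sub_sq {c : ℝ} (hc : 0 < c) :
    ∫ t in {t | t ^ 2 < c}, (√(c - t ^ 2))⁻¹ = π := by
  have ha : 0 < √c := sqrt_pos.2 hc
  rw [setOf_sq_lt_eq_Ioo, ← integral_Ioc_eq_integral_Ioo,
    ← intervalIntegral.integral_of_le (by linarith),
    intervalIntegral.integral_eq_sub_of_hasDerivAt_of_le (by linarith)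
      (f := fun s => arcsin (s / √c)) (by fun_prop) (fun t ht => hasDerivAt_arcsin_div_sqrt ht)
      (intervalIntegrable_inv_sqrt_sub_sq c)]
  simp [div_self ha.ne', neg_div, arcsin_one]

theorem integrableOn_inv_sqrt_sub_sq_sub_sq (r : ℝ) :
    IntegrableOn (fun k : ℝ × ℝ => (√(r - k.1 ^ 2 - k.2 ^ 2))⁻¹) {k | k.1 ^ 2 + k.2 ^ 2 < r} := by
  set D := {k : ℝ × ℝ | k.1 ^ 2 + k.2 ^ 2 < r}
  have hD : MeasurableSet D := measurableSet_lt (by fun_prop) (by fun_prop)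
  have hslice : ∀ x : ℝ, (fun y => D.indicator (fun k => (√(r - k.1 ^ 2 - k.2 ^ 2))⁻¹) (x, y))
      = {y | y ^ 2 < r - x ^ 2}.indicator fun y => (√(r - x ^ 2 - y ^ 2))⁻¹ := by
    intro x
    ext y
    have hmem : (x, y) ∈ D ↔ y ∈ {y : ℝ | y ^ 2 < r - x ^ 2} := by
      show x ^ 2 + y ^ 2 < r ↔ y ^ 2 < r - x ^ 2; constructor <;> intro h <;> linarith
    by_cases h : (x, y) ∈ D
    · rw [indicator_of_mem h, indicator_of_mem (hmem.1 h)]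
    · rw [indicator_of_notMem h, indicator_of_notMem (mt hmem.2 h)]
  have hnorm : (fun x : ℝ => ∫ y, ‖D.indicator (fun k => (√(r - k.1 ^ 2 - k.2 ^ 2))⁻¹) (x, y)‖)
      = {x | x ^ 2 < r}.indicator fun _ => π := by
    ext x
    simp only [Real.norm_eq_abs,
      abs_of_nonneg (indicator_nonneg (fun _ _ => inv_nonneg.2 (sqrt_nonneg _)) _)]
    rw [hslice x, integral_indicator (measurableSet_lt (by fun_prop) (by fun_prop))]
    by_cases hx : x ∈ {x : ℝ | x ^ 2 < r}
    · rw [indicator_of_mem hx, integral_inv_sqrt_sub_sq (by simpa [sub_pos] using hx)]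
    · have hempty : {y : ℝ | y ^ 2 < r - x ^ 2} = ∅ :=
        eq_empty_of_forall_notMem fun y (hy : y ^ 2 < r - x ^ 2) =>
          hx (show x ^ 2 < r by nlinarith [sq_nonneg y])
      rw [indicator_of_notMem hx, hempty, Measure.restrict_empty, integral_zero_measure]
  rw [← integrable_indicator_iff hD, Measure.volume_eq_prod,
    integrable_prod_iff ((Measurable.indicator (by fun_prop) hD).aestronglyMeasurable)]
  refine ⟨ae_of_all _ fun x => ?_, ?_⟩
  · rw [hslice x]
    exact (integrableOn_inv_sqrt_sub_sq _).integrable_indicator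
      (measurableSet_lt (by fun_prop) (by fun_prop))
  · rw [hnorm, setOf_sq_lt_eq_Ioo]
    exact (integrableOn_const measure_Ioo_lt_top.ne).integrable_indicator measurableSet_Ioo

theorem integrable_mul_div_sqrt {F : ℝ × ℝ → ℂ} {q : ℝ × ℝ → ℝ} {r : ℝ} (hFc : Continuous F)
    (hFsupp : HasCompactSupport F) (hFdisk : ∀ k, F k ≠ 0 → k.1 ^ 2 + k.2 ^ 2 < r)
    (hq : Continuous q) :
    Integrable (fun k => F k * ((q k / √(r - k.1 ^ 2 - k.2 ^ 2) : ℝ) : ℂ)) := by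
  obtain ⟨M, hM⟩ := (hFsupp.mul_right (f' := fun k => (q k : ℂ))).exists_bound_of_continuous
    (hFc.mul (continuous_ofReal.comp hq))
  refine IntegrableOn.integrable_of_forall_notMem_eq_zero (s := {k | k.1 ^ 2 + k.2 ^ 2 < r}) ?_
    fun k hk => by simp [not_imp_comm.1 (hFdisk k) hk]
  refine ((integrableOn_inv_sqrt_sub_sq_sub_sq r).ofReal.bdd_mul
    (hFc.mul (continuous_ofReal.comp hq)).aestronglyMeasurable (ae_of_all _ hM)).congr
    (ae_of_all _ fun k => ?_)
  simp only [Pi.mul_apply, Function.comp_apply, map_inv₀, coe_algebraMap, mul_assoc,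
    div_eq_mul_inv, ofReal_mul, ofReal_inv]

section PlaneWave

variable {E K : Type*} [NormedAddCommGroup E] [NormedSpace ℝ E] {L : K → E →L[ℝ] ℝ} {b : K → ℂ}
  {C : ℝ}

theorem hasFDerivAt_mul_cexp_I_mul (c : ℂ) (ℓ : E →L[ℝ] ℝ) (x : E) :
    HasFDerivAt (fun y => c * cexp (I * ℓ y)) ((c * cexp (I * ℓ x) * I) • ofRealCLM.comp ℓ) x := by
  have hℓ : HasFDerivAt (fun y => I * (ℓ y : ℂ)) (I • ofRealCLM.comp ℓ) x :=
    (ofRealCLM.hasFDerivAt.comp x ℓ.hasFDerivAt).const_smul I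
  exact (hℓ.cexp.const_mul c).congr_fderiv (by rw [smul_smul, smul_smul, mul_assoc])

theorem norm_mul_opNorm_le (hLC : ∀ k, b k ≠ 0 → ‖L k‖ ≤ C) (k : K) :
    ‖b k‖ * ‖L k‖ ≤ C * ‖b k‖ := by
  rcases eq_or_ne (b k) 0 with h | h
  · simp [h]
  · rw [mul_comm]; exact mul_le_mul_of_nonneg_right (hLC k h) (norm_nonneg _)

theorem norm_smul_ofRealCLM_comp_le (hLC : ∀ k, b k ≠ 0 → ‖L k‖ ≤ C) (k : K) (c : ℂ)
    (hc : ‖c‖ = 1) : ‖(b k * c * I) • ofRealCLM.comp (L k)‖ ≤ C * ‖b k‖ := by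
  rw [norm_smul, norm_mul, norm_mul, hc, norm_I, mul_one, mul_one]
  refine le_trans ?_ (norm_mul_opNorm_le hLC k)
  gcongr
  exact (ofRealCLM.opNorm_comp_le _).trans (by rw [ofRealCLM_norm, one_mul])

variable [MeasurableSpace K] {μ : Measure K}

noncomputable def planeWaveIntegral (μ : Measure K) (L : K → E →L[ℝ] ℝ) (b : K → ℂ) (x : E) :
    ℂ :=
  ∫ k, b k * cexp (I * L k x) ∂μ

theorem aestronglyMeasurable_cexp_I_mul_apply (hL : AEStronglyMeasurable L μ) (x : E) :
    AEStronglyMeasurable (fun k => cexp (I * L k x)) μ :=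
  (by fun_prop : Continuous fun t : ℝ => cexp (I * t)).comp_aestronglyMeasurable
    (hL.apply_continuousLinearMap x)

theorem integrable_mul_cexp_I_mul (hL : AEStronglyMeasurable L μ) (hb : Integrable b μ) (x : E) :
    Integrable (fun k => b k * cexp (I * L k x)) μ :=
  hb.mul_bdd (aestronglyMeasurable_cexp_I_mul_apply hL x)
    (ae_of_all _ fun _ => (norm_exp_I_mul_ofReal _).le)

theorem integrable_I_mul_apply_mul (hL : AEStronglyMeasurable L μ) (hb : Integrable b μ)
    (hLC : ∀ k, b k ≠ 0 → ‖L k‖ ≤ C) (v : E) :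
    Integrable (fun k => I * L k v * b k) μ := by
  refine (hb.norm.const_mul (C * ‖v‖)).mono'
    ((aestronglyMeasurable_const.mul
      (continuous_ofReal.comp_aestronglyMeasurable (hL.apply_continuousLinearMap v))).mul
      hb.aestronglyMeasurable) (ae_of_all _ fun k => ?_)
  calc ‖I * L k v * b k‖ = ‖L k v‖ * ‖b k‖ := by simp
    _ ≤ ‖L k‖ * ‖v‖ * ‖b k‖ := by gcongr; exact (L k).le_opNorm v
    _ ≤ C * ‖v‖ * ‖b k‖ := by nlinarith [norm_mul_opNorm_le hLC k, norm_nonneg v, norm_nonneg (b k)]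

theorem integrable_smul_ofRealCLM_comp (hL : AEStronglyMeasurable L μ) (hb : Integrable b μ)
    (hLC : ∀ k, b k ≠ 0 → ‖L k‖ ≤ C) (x : E) :
    Integrable (fun k => (b k * cexp (I * L k x) * I) • ofRealCLM.comp (L k)) μ :=
  (hb.norm.const_mul C).mono'
    (((integrable_mul_cexp_I_mul hL hb x).aestronglyMeasurable.mul_const I).smul
      ((ContinuousLinearMap.compL ℝ E ℝ ℂ ofRealCLM).continuous.comp_aestronglyMeasurable hL))
    (ae_of_all _ fun k =>
      norm_smul_ofRealCLM_comp_le hLC k _ (norm_exp_I_mul_ofReal _))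

theorem hasFDerivAt_planeWaveIntegral (hL : AEStronglyMeasurable L μ) (hb : Integrable b μ)
    (hLC : ∀ k, b k ≠ 0 → ‖L k‖ ≤ C) (x : E) :
    HasFDerivAt (planeWaveIntegral μ L b)
      (∫ k, (b k * cexp (I * L k x) * I) • ofRealCLM.comp (L k) ∂μ) x :=
  hasFDerivAt_integral_of_dominated_of_fderiv_le Filter.univ_mem
    (Filter.Eventually.of_forall fun y => (integrable_mul_cexp_I_mul hL hb y).aestronglyMeasurable)
    (integrable_mul_cexp_I_mul hL hb x) (integrable_smul_ofRealCLM_comp hL hb hLC x).1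
    (ae_of_all _ fun k _ _ =>
      norm_smul_ofRealCLM_comp_le hLC k _ (norm_exp_I_mul_ofReal _))
    (hb.norm.const_mul C)
    (ae_of_all _ fun k y _ => hasFDerivAt_mul_cexp_I_mul (b k) (L k) y)

theorem fderiv_planeWaveIntegral_apply (hL : AEStronglyMeasurable L μ) (hb : Integrable b μ)
    (hLC : ∀ k, b k ≠ 0 → ‖L k‖ ≤ C) (x v : E) :
    fderiv ℝ (planeWaveIntegral μ L b) x v =
      planeWaveIntegral μ L (fun k => I * L k v * b k) x := by
  rw [(hasFDerivAt_planeWaveIntegral hL hb hLC x).fderiv,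
    ContinuousLinearMap.integral_apply (integrable_smul_ofRealCLM_comp hL hb hLC x)]
  refine integral_congr_ae (ae_of_all _ fun k => ?_)
  simp only [smul_apply, ContinuousLinearMap.comp_apply, ofRealCLM_apply,
    smul_eq_mul]
  ring

end PlaneWave

section Coordinates

variable {ι K : Type*} [Fintype ι] [DecidableEq ι] [MeasurableSpace K] {μ : Measure K}
  {L : K → (ι → ℝ) →L[ℝ] ℝ} {C : ℝ}

theorem helmholtz_planeWaveIntegral {b : K → ℂ} (hL : AEStronglyMeasurable L μ)
    (hb : Integrable b μ) (hLC : ∀ k, b k ≠ 0 → ‖L k‖ ≤ C) {ω : ℝ}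
    (hdisp : ∀ k, b k ≠ 0 → ∑ i, L k (Pi.single i 1) ^ 2 = ω ^ 2) (x : ι → ℝ) :
    ∑ i, fderiv ℝ (fun y => fderiv ℝ (planeWaveIntegral μ L b) y (Pi.single i 1)) x
        (Pi.single i 1) + (ω ^ 2 : ℝ) * planeWaveIntegral μ L b x = 0 := by
  set ξ : ι → K → ℂ := fun i k => I * L k (Pi.single i 1) with hξ
  have hLCξ : ∀ i k, ξ i k * b k ≠ 0 → ‖L k‖ ≤ C := fun i k h => hLC k (right_ne_zero_of_mul h)
  have hξb : ∀ i, Integrable (fun k => ξ i k * b k) μ := fun i =>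
    integrable_I_mul_apply_mul hL hb hLC _
  have hξξb : ∀ i, Integrable (fun k => ξ i k * (ξ i k * b k)) μ := fun i =>
    integrable_I_mul_apply_mul hL (hξb i) (hLCξ i) _
  have hsecond : ∀ i, fderiv ℝ (fun y => fderiv ℝ (planeWaveIntegral μ L b) y (Pi.single i 1)) x
      (Pi.single i 1) = planeWaveIntegral μ L (fun k => ξ i k * (ξ i k * b k)) x := fun i => by
    simp_rw [fderiv_planeWaveIntegral_apply hL hb hLC]
    exact fderiv_planeWaveIntegral_apply hL (hξb i) (hLCξ i) x _
  have hamplitude : ∀ k, ∑ i, ξ i k * (ξ i k * b k) + (ω ^ 2 : ℝ) * b k = 0 := fun k => by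
    rcases eq_or_ne (b k) 0 with h | h
    · simp [h]
    have hd : ∑ i, (L k (Pi.single i 1) : ℂ) ^ 2 = (ω ^ 2 : ℝ) := by exact_mod_cast hdisp k h
    have hterm : ∀ i, ξ i k * (ξ i k * b k) = -((L k (Pi.single i 1) : ℂ) ^ 2 * b k) := fun i => by
      linear_combination ((L k (Pi.single i 1) : ℂ) ^ 2 * b k) * I_sq
    rw [Finset.sum_congr rfl fun i _ => hterm i, Finset.sum_neg_distrib, ← Finset.sum_mul, hd]
    ring
  simp only [hsecond, planeWaveIntegral]
  rw [← integral_finsetSum _ fun i _ => integrable_mul_cexp_I_mul hL (hξξb i) x,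
    ← integral_const_mul, ← integral_add
      (integrable_finsetSum _ fun i _ => integrable_mul_cexp_I_mul hL (hξξb i) x)
      ((integrable_mul_cexp_I_mul hL hb x).const_mul _)]
  refine integral_eq_zero_of_ae (ae_of_all _ fun k => ?_)
  calc _ = (∑ i, ξ i k * (ξ i k * b k) + (ω ^ 2 : ℝ) * b k) * cexp (I * L k x) := by
        simp only [add_mul, Finset.sum_mul, mul_assoc]
    _ = 0 := by rw [hamplitude k, zero_mul]

theorem divergence_planeWaveIntegral_eq_zero {b : ι → K → ℂ} (hL : AEStronglyMeasurable L μ)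
    (hb : ∀ j, Integrable (b j) μ) (hLC : ∀ j k, b j k ≠ 0 → ‖L k‖ ≤ C)
    (htrans : ∀ k, ∑ j, L k (Pi.single j 1) * b j k = 0) (x : ι → ℝ) :
    ∑ j, fderiv ℝ (planeWaveIntegral μ L (b j)) x (Pi.single j 1) = 0 := by
  simp only [fderiv_planeWaveIntegral_apply hL (hb _) (hLC _), planeWaveIntegral]
  rw [← integral_finsetSum _ fun j _ =>
    integrable_mul_cexp_I_mul hL (integrable_I_mul_apply_mul hL (hb j) (hLC j) _) x]
  refine integral_eq_zero_of_ae (ae_of_all _ fun k => ?_)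
  have h := congrArg (· * (I * cexp (I * L k x))) (htrans k)
  simp only [Finset.sum_mul, zero_mul] at h
  simp only [Pi.zero_apply, ← h]
  exact Finset.sum_congr rfl fun j _ => by ring

end Coordinates

noncomputable def dotProductCLM {ι : Type*} [Fintype ι] (ξ : ι → ℝ) : (ι → ℝ) →L[ℝ] ℝ :=
  ∑ j, ξ j • ContinuousLinearMap.proj j

section DotProductCLM
variable {ι : Type*} [Fintype ι]

theorem dotProductCLM_apply (ξ x : ι → ℝ) : dotProductCLM ξ x = ξ ⬝ᵥ x := by
  simp [dotProductCLM, dotProduct]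

theorem dotProductCLM_single [DecidableEq ι] (ξ : ι → ℝ) (i : ι) :
    dotProductCLM ξ (Pi.single i 1) = ξ i := by
  simp [dotProductCLM_apply]

theorem continuous_dotProductCLM : Continuous (dotProductCLM : (ι → ℝ) → (ι → ℝ) →L[ℝ] ℝ) := by
  unfold dotProductCLM; fun_prop

end DotProductCLM

noncomputable def verticalWavenumber (k₀ : ℝ) (k : ℝ × ℝ) : ℝ := √(k₀ ^ 2 - k.1 ^ 2 - k.2 ^ 2)

noncomputable def waveVector (k₀ : ℝ) (k : ℝ × ℝ) : Fin 3 → ℝ :=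
  ![-k.1, -k.2, verticalWavenumber k₀ k]

noncomputable def beamPolarization (k₀ p₁ p₂ : ℝ) (k : ℝ × ℝ) : Fin 3 → ℝ :=
  ![p₁, p₂, (p₁ * k.1 + p₂ * k.2) / verticalWavenumber k₀ k]

section Beam
variable {k₀ : ℝ} {k : ℝ × ℝ}

theorem continuous_verticalWavenumber (k₀ : ℝ) : Continuous (verticalWavenumber k₀) := by
  unfold verticalWavenumber; fun_prop

theorem continuous_waveVector (k₀ : ℝ) : Continuous (waveVector k₀) := by
  have := continuous_verticalWavenumber k₀
  unfold waveVector; fun_prop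

theorem sum_waveVector_sq (hk : k.1 ^ 2 + k.2 ^ 2 ≤ k₀ ^ 2) :
    ∑ i, waveVector k₀ k i ^ 2 = k₀ ^ 2 := by
  simp only [Fin.sum_univ_three, waveVector, verticalWavenumber, Matrix.cons_val]
  rw [sq_sqrt (by linarith)]
  ring

theorem waveVector_dotProduct_beamPolarization (p₁ p₂ : ℝ) (hk : k.1 ^ 2 + k.2 ^ 2 < k₀ ^ 2) :
    waveVector k₀ k ⬝ᵥ beamPolarization k₀ p₁ p₂ k = 0 := by
  have hs : verticalWavenumber k₀ k ≠ 0 := (sqrt_pos.2 (by linarith)).ne'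
  simp only [dotProduct, Fin.sum_univ_three, waveVector, beamPolarization, Matrix.cons_val]
  field_simp
  ring

theorem exp_phase_eq_exp_mul_exp_dotProductCLM (k₀ r₀ : ℝ) (k : ℝ × ℝ) (x : Fin 3 → ℝ) :
    cexp (-I * ((k.1 * x 0 + k.2 * x 1 : ℝ) : ℂ)) *
        cexp (-I * ((√(k₀ ^ 2 - k.1 ^ 2 - k.2 ^ 2) * (r₀ - x 2) : ℝ) : ℂ))
      = cexp (-I * ((verticalWavenumber k₀ k * r₀ : ℝ) : ℂ)) *
        cexp (I * (dotProductCLM (waveVector k₀ k) x : ℂ)) := by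
  rw [← Complex.exp_add, ← Complex.exp_add, dotProductCLM_apply]
  simp only [dotProduct, Fin.sum_univ_three, waveVector, verticalWavenumber, Matrix.cons_val]
  push_cast
  ring_nf

noncomputable def beamAmplitude (k₀ p₁ p₂ r₀ : ℝ) (F : ℝ × ℝ → ℂ) (j : Fin 3) (k : ℝ × ℝ) : ℂ :=
  ((1 / (4 * π ^ 2) : ℝ) : ℂ) * ((1 / 2 : ℂ) * F k * (beamPolarization k₀ p₁ p₂ k j : ℂ)) *
    cexp (-I * ((verticalWavenumber k₀ k * r₀ : ℝ) : ℂ))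

variable {p₁ p₂ r₀ : ℝ} {F : ℝ × ℝ → ℂ}

theorem ne_zero_of_beamAmplitude_ne_zero {j : Fin 3} (h : beamAmplitude k₀ p₁ p₂ r₀ F j k ≠ 0) :
    F k ≠ 0 := by
  rintro hF
  simp [beamAmplitude, hF] at h

theorem integrable_beamAmplitude (hFc : Continuous F) (hFsupp : HasCompactSupport F)
    (hFdisk : ∀ k, F k ≠ 0 → k.1 ^ 2 + k.2 ^ 2 < k₀ ^ 2) (j : Fin 3) :
    Integrable (beamAmplitude k₀ p₁ p₂ r₀ F j) := by
  have hpol : Integrable fun k => F k * (beamPolarization k₀ p₁ p₂ k j : ℂ) := by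
    have hFint : Integrable F := hFc.integrable_of_hasCompactSupport hFsupp
    fin_cases j
    · simpa [beamPolarization] using hFint.mul_const (p₁ : ℂ)
    · simpa [beamPolarization] using hFint.mul_const (p₂ : ℂ)
    · exact integrable_mul_div_sqrt hFc hFsupp hFdisk (by fun_prop)
  have hphase : Continuous fun k => cexp (-I * ((verticalWavenumber k₀ k * r₀ : ℝ) : ℂ)) := by
    have := continuous_verticalWavenumber k₀
    fun_prop
  refine ((hpol.const_mul (((1 / (4 * π ^ 2) : ℝ) : ℂ) * (1 / 2))).mul_bdd
    hphase.aestronglyMeasurable (ae_of_all _ fun k => (by simp [norm_exp] : _ ≤ (1 : ℝ)))).congr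
    (ae_of_all _ fun k => ?_)
  simp only [beamAmplitude]
  ring

theorem sum_waveVector_mul_beamAmplitude (hFdisk : ∀ k, F k ≠ 0 → k.1 ^ 2 + k.2 ^ 2 < k₀ ^ 2)
    (k : ℝ × ℝ) : ∑ j, (waveVector k₀ k j : ℂ) * beamAmplitude k₀ p₁ p₂ r₀ F j k = 0 := by
  have hsum : ∑ j, (waveVector k₀ k j : ℂ) * beamAmplitude k₀ p₁ p₂ r₀ F j k
      = ((1 / (4 * π ^ 2) : ℝ) : ℂ) * ((1 / 2 : ℂ) * F k) *
          cexp (-I * ((verticalWavenumber k₀ k * r₀ : ℝ) : ℂ)) *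
          ((waveVector k₀ k ⬝ᵥ beamPolarization k₀ p₁ p₂ k : ℝ) : ℂ) := by
    simp only [beamAmplitude, dotProduct, ofReal_sum, ofReal_mul, Finset.mul_sum]
    exact Finset.sum_congr rfl fun j _ => by ring
  rcases eq_or_ne (F k) 0 with hF | hF
  · simp [hsum, hF]
  · rw [hsum, waveVector_dotProduct_beamPolarization p₁ p₂ (hFdisk k hF), ofReal_zero, mul_zero]

end Beam

theorem downward_gaussian_beam_solves_helmholtz_general
    (k₀ : ℝ) (p₁ p₂ : ℝ) (r₀ : ℝ)
    (F : ℝ × ℝ → ℂ) (hFc : Continuous F) (hFsupp : HasCompactSupport F)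
    (hFdisk : ∀ k : ℝ × ℝ, F k ≠ 0 → k.1 ^ 2 + k.2 ^ 2 < k₀ ^ 2)
    (g : ℝ × ℝ → Fin 3 → ℂ)
    (hg : ∀ k : ℝ × ℝ, g k = fun j =>
      (1 / 2 : ℂ) * F k *
        ![(p₁ : ℂ), (p₂ : ℂ),
          (((p₁ * k.1 + p₂ * k.2) / Real.sqrt (k₀ ^ 2 - k.1 ^ 2 - k.2 ^ 2) : ℝ) : ℂ)] j)
    (E₀ : (Fin 3 → ℝ) → Fin 3 → ℂ)
    (hE₀ : ∀ (x : Fin 3 → ℝ) (j : Fin 3), E₀ x j =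
      ((1 / (4 * Real.pi ^ 2) : ℝ) : ℂ) *
      ∫ k : ℝ × ℝ, g k j *
        Complex.exp (-Complex.I * ((k.1 * x 0 + k.2 * x 1 : ℝ) : ℂ)) *
        Complex.exp (-Complex.I *
            ((Real.sqrt (k₀ ^ 2 - k.1 ^ 2 - k.2 ^ 2) * (r₀ - x 2) : ℝ) : ℂ))) :
    (∀ (x : Fin 3 → ℝ) (j : Fin 3),
        (∑ i : Fin 3, pd (fun y => pd (fun z => E₀ z j) i y) i x)
          + ((k₀ ^ 2 : ℝ) : ℂ) * E₀ x j = 0) ∧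
    (∀ x : Fin 3 → ℝ, ∑ j : Fin 3, pd (fun y => E₀ y j) j x = 0) := by
  set L : ℝ × ℝ → (Fin 3 → ℝ) →L[ℝ] ℝ := fun k => dotProductCLM (waveVector k₀ k)
  have hE : ∀ y j, E₀ y j = planeWaveIntegral volume L (beamAmplitude k₀ p₁ p₂ r₀ F j) y := by
    intro y j
    rw [hE₀, planeWaveIntegral, ← integral_const_mul]
    refine integral_congr_ae (ae_of_all _ fun k => ?_)
    have hpol : ((beamPolarization k₀ p₁ p₂ k j : ℝ) : ℂ) = ![(p₁ : ℂ), (p₂ : ℂ),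
        (((p₁ * k.1 + p₂ * k.2) / √(k₀ ^ 2 - k.1 ^ 2 - k.2 ^ 2) : ℝ) : ℂ)] j := by
      fin_cases j <;> rfl
    beta_reduce
    rw [hg k, mul_assoc _ (cexp _), exp_phase_eq_exp_mul_exp_dotProductCLM, beamAmplitude, hpol]
    ring
  have hL : Continuous L := continuous_dotProductCLM.comp (continuous_waveVector k₀)
  obtain ⟨C, hC⟩ := hFsupp.isCompact.exists_bound_of_continuousOn hL.continuousOn
  have hLC : ∀ j k, beamAmplitude k₀ p₁ p₂ r₀ F j k ≠ 0 → ‖L k‖ ≤ C := fun j k h =>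
    hC k (subset_tsupport F (ne_zero_of_beamAmplitude_ne_zero h))
  have hb := integrable_beamAmplitude (p₁ := p₁) (p₂ := p₂) (r₀ := r₀) hFc hFsupp hFdisk
  refine ⟨fun x j => ?_, fun x => ?_⟩
  · simp only [pd, hE]
    refine helmholtz_planeWaveIntegral hL.aestronglyMeasurable (hb j) (hLC j) (fun k hk => ?_) x
    simp only [L, dotProductCLM_single]
    exact sum_waveVector_sq (hFdisk k (ne_zero_of_beamAmplitude_ne_zero hk)).le
  · simp only [pd, hE]
    refine divergence_planeWaveIntegral_eq_zero hL.aestronglyMeasurable hb hLC (fun k => ?_) x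
    simpa only [L, dotProductCLM_single] using sum_waveVector_mul_beamAmplitude hFdisk k

/-- The downward-propagating Gaussian-beam field `E⁽⁰⁾`, given as a superposition of
plane waves with amplitude `g` supported in the disk of radius `k₀`, solves the
homogeneous Helmholtz system and is divergence-free. -/
theorem downward_gaussian_beam_solves_helmholtz
    (k₀ : ℝ) (hk₀ : 0 < k₀) (p₁ p₂ : ℝ) (r₀ : ℝ)
    (F : ℝ × ℝ → ℂ) (hFc : Continuous F) (hFsupp : HasCompactSupport F)
    (hFdisk : ∀ k : ℝ × ℝ, F k ≠ 0 → k.1 ^ 2 + k.2 ^ 2 < k₀ ^ 2)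
    (g : ℝ × ℝ → Fin 3 → ℂ)
    (hg : ∀ k : ℝ × ℝ, g k = fun j =>
      (1 / 2 : ℂ) * F k *
        ![(p₁ : ℂ), (p₂ : ℂ),
          (((p₁ * k.1 + p₂ * k.2) / Real.sqrt (k₀ ^ 2 - k.1 ^ 2 - k.2 ^ 2) : ℝ) : ℂ)] j)
    (E₀ : (Fin 3 → ℝ) → Fin 3 → ℂ)
    (hE₀ : ∀ (x : Fin 3 → ℝ) (j : Fin 3), E₀ x j =
      ((1 / (4 * Real.pi ^ 2) : ℝ) : ℂ) *
      ∫ k : ℝ × ℝ, g k j *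
        Complex.exp (-Complex.I * ((k.1 * x 0 + k.2 * x 1 : ℝ) : ℂ)) *
        Complex.exp (-Complex.I *
            ((Real.sqrt (k₀ ^ 2 - k.1 ^ 2 - k.2 ^ 2) * (r₀ - x 2) : ℝ) : ℂ))) :
    (∀ (x : Fin 3 → ℝ) (j : Fin 3),
        (∑ i : Fin 3, pd (fun y => pd (fun z => E₀ z j) i y) i x)
          + ((k₀ ^ 2 : ℝ) : ℂ) * E₀ x j = 0) ∧
    (∀ x : Fin 3 → ℝ, ∑ j : Fin 3, pd (fun y => E₀ y j) j x = 0) :=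
  downward_gaussian_beam_solves_helmholtz_general k₀ p₁ p₂ r₀ F hFc hFsupp hFdisk g hg E₀ hE₀
end

section
/- Let k₀ > 0 and let ν, s ∈ ℝ³ be unit vectors. Set c = s − 2⟨ν, s⟩ν and assume c₃ ≠ 0. Define on the open disk D = {(k₁,k₂) : k₁² + k₂² < k₀²} the phase function Ψ(k₁,k₂) = ⟨k/k₀, s⟩ − 2⟨k/k₀, ν⟩⟨ν, s⟩, where k = k(k₁,k₂) = (k₁, k₂, −√(k₀² − k₁² − k₂²)). Then Ψ is differentiable on D, and for (k₁,k₂) ∈ D the gradient ∇Ψ(k₁,k₂) vanishes if and only if (k₁,k₂) = −k₀·sign(c₃)·(c₁, c₂). In particular Ψ has exactly one critical point in D. -/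
/-!
Since `⟨k, s⟩ - 2⟨k, ν⟩⟨ν, s⟩ = ⟨k, c⟩`, the phase is `Ψ = (k₁c₁ + k₂c₂ - w c₃) / k₀` with
`w = √(k₀² - k₁² - k₂²) > 0`, and `∇Ψ = 0` is the system `c₁w + k₁c₃ = 0`, `c₂w + k₂c₃ = 0`.
Squaring and adding, and using `|c| = 1`, gives `w² = k₀²c₃²`, i.e. `w = k₀ sign(c₃) c₃`, so the
system forces `(k₁, k₂) = -k₀ sign(c₃) (c₁, c₂)`; conversely this point lies in the disk because
`c₁² + c₂² = 1 - c₃² < 1`, and it solves the system.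
-/

noncomputable def dot3 (v w : Fin 3 → ℝ) : ℝ := ∑ i, v i * w i

theorem dot3_reflection_self {ν : Fin 3 → ℝ} (hν : dot3 ν ν = 1) (s : Fin 3 → ℝ) :
    dot3 (fun i => s i - 2 * dot3 ν s * ν i) (fun i => s i - 2 * dot3 ν s * ν i) =
      dot3 s s := by
  simp only [dot3, Fin.sum_univ_three] at hν ⊢
  linear_combination 4 * (ν 0 * s 0 + ν 1 * s 1 + ν 2 * s 2) ^ 2 * hν

theorem dot3_div_sub_two_mul (v ν s : Fin 3 → ℝ) (k₀ : ℝ) :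
    dot3 (fun i => v i / k₀) s - 2 * dot3 (fun i => v i / k₀) ν * dot3 ν s =
      dot3 v (fun i => s i - 2 * dot3 ν s * ν i) / k₀ := by
  simp only [dot3, Fin.sum_univ_three]
  ring

theorem Real.sign_mul_self_eq_abs (r : ℝ) : Real.sign r * r = |r| := by
  rcases lt_trichotomy r 0 with h | rfl | h
  · rw [Real.sign_of_neg h, abs_of_neg h]; ring
  · simp
  · rw [Real.sign_of_pos h, abs_of_pos h]; ring

theorem Real.sign_sq_of_ne_zero {r : ℝ} (hr : r ≠ 0) : Real.sign r ^ 2 = 1 := by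
  rcases Real.sign_apply_eq_of_ne_zero r hr with h | h <;> simp [h]

theorem eq_mul_sign_mul_self_of_sq_eq {w k₀ γ : ℝ} (hw : 0 ≤ w) (hk₀ : 0 ≤ k₀)
    (h : w ^ 2 = k₀ ^ 2 * γ ^ 2) : w = k₀ * (Real.sign γ * γ) := by
  rw [Real.sign_mul_self_eq_abs, ← pow_left_inj₀ hw (by positivity) two_ne_zero, h, mul_pow,
    sq_abs]

theorem ContinuousLinearMap.smul_fst_add_smul_snd_eq_zero_iff {R : Type*} [CommSemiring R]
    [TopologicalSpace R] [IsTopologicalSemiring R] (α β : R) :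
    α • fst R R R + β • snd R R R = 0 ↔ α = 0 ∧ β = 0 := by
  refine ⟨fun h => ⟨?_, ?_⟩, ?_⟩
  · simpa using DFunLike.congr_fun h (1, 0)
  · simpa using DFunLike.congr_fun h (0, 1)
  · rintro ⟨rfl, rfl⟩
    ext <;> simp

noncomputable def phase (k₀ : ℝ) (c : Fin 3 → ℝ) (k : ℝ × ℝ) : ℝ :=
  (k.1 * c 0 + k.2 * c 1 - √(k₀ ^ 2 - k.1 ^ 2 - k.2 ^ 2) * c 2) / k₀

open ContinuousLinearMap in
theorem hasFDerivAt_sqrt_sub_sq_sub_sq {r : ℝ} {k : ℝ × ℝ} (hk : k.1 ^ 2 + k.2 ^ 2 < r) :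
    HasFDerivAt (fun k : ℝ × ℝ => √(r - k.1 ^ 2 - k.2 ^ 2))
      ((-k.1 / √(r - k.1 ^ 2 - k.2 ^ 2)) • fst ℝ ℝ ℝ +
        (-k.2 / √(r - k.1 ^ 2 - k.2 ^ 2)) • snd ℝ ℝ ℝ) k := by
  have hr : 0 < r - k.1 ^ 2 - k.2 ^ 2 := by linarith
  refine ((((hasFDerivAt_const r k).sub ((hasFDerivAt_fst (p := k)).pow 2)).sub
    ((hasFDerivAt_snd (p := k)).pow 2)).sqrt hr.ne').congr_fderiv ?_
  module

open ContinuousLinearMap in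
theorem hasFDerivAt_phase (k₀ : ℝ) (c : Fin 3 → ℝ) {k : ℝ × ℝ}
    (hk : k.1 ^ 2 + k.2 ^ 2 < k₀ ^ 2) :
    HasFDerivAt (phase k₀ c)
      (((c 0 + k.1 * c 2 / √(k₀ ^ 2 - k.1 ^ 2 - k.2 ^ 2)) / k₀) • fst ℝ ℝ ℝ +
        ((c 1 + k.2 * c 2 / √(k₀ ^ 2 - k.1 ^ 2 - k.2 ^ 2)) / k₀) • snd ℝ ℝ ℝ) k := by
  rw [show phase k₀ c = _ from funext fun k => div_eq_mul_inv _ _]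
  refine ((((hasFDerivAt_fst.mul_const (c 0)).add (hasFDerivAt_snd.mul_const (c 1))).sub
    ((hasFDerivAt_sqrt_sub_sq_sub_sq hk).mul_const (c 2))).mul_const k₀⁻¹).congr_fderiv ?_
  module

theorem critical_equations_iff {k₀ w a b γ x y : ℝ} (hk₀ : 0 < k₀) (hw : 0 < w)
    (hw2 : w ^ 2 = k₀ ^ 2 - x ^ 2 - y ^ 2) (habγ : a ^ 2 + b ^ 2 + γ ^ 2 = 1) (hγ : γ ≠ 0) :
    (a * w + x * γ = 0 ∧ b * w + y * γ = 0) ↔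
      (x, y) = (-(k₀ * Real.sign γ) * a, -(k₀ * Real.sign γ) * b) := by
  have hσ := Real.sign_sq_of_ne_zero hγ
  rw [Prod.ext_iff]
  constructor
  · rintro ⟨hx, hy⟩
    have hw' : w = k₀ * (Real.sign γ * γ) := eq_mul_sign_mul_self_of_sq_eq hw.le hk₀.le <| by
      linear_combination
        (a * w - x * γ) * hx + (b * w - y * γ) * hy + γ ^ 2 * hw2 - w ^ 2 * habγ
    subst hw'
    exact ⟨mul_right_cancel₀ hγ (by linear_combination hx),
      mul_right_cancel₀ hγ (by linear_combination hy)⟩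
  · rintro ⟨rfl, rfl⟩
    simp only at hw2
    have hw' : w = k₀ * (Real.sign γ * γ) := eq_mul_sign_mul_self_of_sq_eq hw.le hk₀.le <| by
      linear_combination hw2 - k₀ ^ 2 * (a ^ 2 + b ^ 2) * hσ - k₀ ^ 2 * habγ
    subst hw'
    constructor <;> ring

theorem sq_add_sq_lt_of_sq_add_sq_add_sq_eq_one {k₀ a b γ : ℝ} (hk₀ : 0 < k₀)
    (habγ : a ^ 2 + b ^ 2 + γ ^ 2 = 1) (hγ : γ ≠ 0) :
    (-(k₀ * Real.sign γ) * a) ^ 2 + (-(k₀ * Real.sign γ) * b) ^ 2 < k₀ ^ 2 := by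
  have hσ := Real.sign_sq_of_ne_zero hγ
  have hpos : 0 < k₀ ^ 2 * γ ^ 2 := by positivity
  linear_combination (k₀ ^ 2 * (a ^ 2 + b ^ 2)) * hσ + k₀ ^ 2 * habγ + hpos

theorem fderiv_phase_eq_zero_iff {k₀ : ℝ} {c : Fin 3 → ℝ} (hk₀ : 0 < k₀)
    (hc : c 0 ^ 2 + c 1 ^ 2 + c 2 ^ 2 = 1) (hc2 : c 2 ≠ 0) {k : ℝ × ℝ}
    (hk : k.1 ^ 2 + k.2 ^ 2 < k₀ ^ 2) :
    fderiv ℝ (phase k₀ c) k = 0 ↔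
      k = (-(k₀ * Real.sign (c 2)) * c 0, -(k₀ * Real.sign (c 2)) * c 1) := by
  have hpos : 0 < k₀ ^ 2 - k.1 ^ 2 - k.2 ^ 2 := by linarith
  have hw := Real.sqrt_pos.2 hpos
  rw [(hasFDerivAt_phase k₀ c hk).fderiv, ContinuousLinearMap.smul_fst_add_smul_snd_eq_zero_iff]
  simp only [add_div' _ _ _ hw.ne', div_eq_zero_iff, hk₀.ne', hw.ne', or_false]
  exact critical_equations_iff hk₀ hw (Real.sq_sqrt hpos.le) hc hc2

/-- The phase function `Ψ(k₁,k₂) = ⟨k/k₀, s⟩ − 2⟨k/k₀, ν⟩⟨ν, s⟩` is differentiable on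
the open disk `D` of radius `k₀`, and its gradient vanishes at a point of `D` exactly at
`(k₁*,k₂*) = −k₀ sign(c₃)(c₁,c₂)`; in particular `Ψ` has exactly one critical point
in `D`. -/
theorem phase_unique_critical_point
    (k₀ : ℝ) (hk₀ : 0 < k₀)
    (ν s : Fin 3 → ℝ) (hν : dot3 ν ν = 1) (hs : dot3 s s = 1)
    (c : Fin 3 → ℝ) (hc : c = fun i => s i - 2 * dot3 ν s * ν i) (hc3 : c 2 ≠ 0)
    (D : Set (ℝ × ℝ)) (hD : D = {k : ℝ × ℝ | k.1 ^ 2 + k.2 ^ 2 < k₀ ^ 2})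
    (kvec : ℝ × ℝ → Fin 3 → ℝ)
    (hkvec : ∀ k : ℝ × ℝ, kvec k = ![k.1, k.2, -Real.sqrt (k₀ ^ 2 - k.1 ^ 2 - k.2 ^ 2)])
    (Ψ : ℝ × ℝ → ℝ)
    (hΨ : ∀ k : ℝ × ℝ, Ψ k =
      dot3 (fun i => kvec k i / k₀) s - 2 * dot3 (fun i => kvec k i / k₀) ν * dot3 ν s) :
    DifferentiableOn ℝ Ψ D ∧
    (∀ k ∈ D, (fderiv ℝ Ψ k = 0 ↔
      k = (-(k₀ * Real.sign (c 2)) * c 0, -(k₀ * Real.sign (c 2)) * c 1))) ∧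
    (∃! k : ℝ × ℝ, k ∈ D ∧ fderiv ℝ Ψ k = 0) := by
  have hc_unit : c 0 ^ 2 + c 1 ^ 2 + c 2 ^ 2 = 1 := by
    have := dot3_reflection_self hν s
    rw [← hc, hs] at this
    simpa [dot3, Fin.sum_univ_three, sq] using this
  have hΨ_eq : Ψ = phase k₀ c := funext fun k => by
    rw [hΨ, dot3_div_sub_two_mul, ← hc, hkvec]
    simp only [dot3, phase, Fin.sum_univ_three, Matrix.cons_val_zero, Matrix.cons_val_one,
      Matrix.cons_val]
    ring
  subst hΨ_eq hD
  have hcrit (k : ℝ × ℝ) (hk : k.1 ^ 2 + k.2 ^ 2 < k₀ ^ 2) :=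
    fderiv_phase_eq_zero_iff hk₀ hc_unit hc3 hk
  have hmem := sq_add_sq_lt_of_sq_add_sq_add_sq_eq_one hk₀ hc_unit hc3
  refine ⟨fun k hk => (hasFDerivAt_phase k₀ c hk).differentiableAt.differentiableWithinAt,
    hcrit, ⟨_, ⟨hmem, (hcrit _ hmem).2 rfl⟩, fun k ⟨hk, hk0⟩ => (hcrit k hk).1 hk0⟩⟩
end

section
/- Let σ > 0 and let Q be a nonzero real number. Then the complex-valued integral ∫_ℝ ( 1/σ³ − ζ²/(2σ⁵) ) · exp( −( ζ/(2σ) − i/Q )² ) dζ = 4√π / (σ² Q²). -/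
/-!
Write the exponent as `-b (ζ - c)²` with `b = 1 / (4σ²)` and `c = 2σi / Q`, so that the integrand
is `σ⁻³ (1 - 2bζ²) e^{-b(ζ-c)²}`. The function `(ζ + c) e^{-b(ζ-c)²}` has derivative
`(1 - 2bζ² + 2bc²) e^{-b(ζ-c)²}` and decays at both ends, so the integral equals
`-2bc² σ⁻³ ∫ e^{-b(ζ-c)²} = -2bc² σ⁻³ √(π / b)`; here `-2bc² = 2 / Q²` and `√(π / b) = 2σ√π`.
-/

open MeasureTheory Complex Real

theorem integrable_pow_mul_of_integrable_exp_mul {f : ℝ → ℂ} (hf : AEStronglyMeasurable f)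
    (hpos : Integrable fun x => Real.exp x • f x) (hneg : Integrable fun x => Real.exp (-x) • f x)
    (n : ℕ) : Integrable fun x : ℝ => (x : ℂ) ^ n * f x := by
  refine ((hpos.norm.add hneg.norm).const_mul n.factorial).mono' (by fun_prop) ?_
  refine ae_of_all _ fun x => ?_
  have hpow : |x| ^ n ≤ n.factorial * (Real.exp x + Real.exp (-x)) := by
    have := Real.pow_div_factorial_le_exp |x| (abs_nonneg x) n
    rw [div_le_iff₀ (by positivity)] at this
    nlinarith [Real.exp_abs_le x]
  simp only [norm_mul, norm_pow, norm_real, Real.norm_eq_abs, norm_smul, Real.abs_exp,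
    Pi.add_apply]
  nlinarith [norm_nonneg (f x)]

theorem integrable_pow_mul_cexp_neg_mul_sq_sub {b : ℂ} (hb : 0 < b.re) (c : ℂ) (n : ℕ) :
    Integrable fun x : ℝ => (x : ℂ) ^ n * cexp (-b * (x - c) ^ 2) := by
  have hexp_mul (t : ℝ) :
      Integrable fun x : ℝ => Real.exp (t * x) • cexp (-b * (x - c) ^ 2) := by
    refine (integrable_cexp_quadratic hb (2 * b * c + t) (-b * c ^ 2)).congr
      (ae_of_all _ fun x => ?_)
    simp only [real_smul, ofReal_exp, ← Complex.exp_add]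
    push_cast
    congr 1
    ring
  exact integrable_pow_mul_of_integrable_exp_mul (by fun_prop) (by simpa using hexp_mul 1)
    (by simpa using hexp_mul (-1)) n

theorem hasDerivAt_cexp_neg_mul_sq_sub (b c : ℂ) (x : ℝ) :
    HasDerivAt (fun x : ℝ => cexp (-b * (x - c) ^ 2))
      (-2 * b * (x - c) * cexp (-b * (x - c) ^ 2)) x := by
  have h : HasDerivAt (fun z : ℂ => -b * (z - c) ^ 2) (-2 * b * (x - c)) x :=
    (((hasDerivAt_id' (x : ℂ)).sub_const c).pow 2 |>.const_mul (-b)).congr_deriv (by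
      norm_num; ring)
  simpa [mul_comm] using h.cexp.comp_ofReal

theorem integral_cexp_neg_mul_sq_sub {b : ℂ} (hb : 0 < b.re) (c : ℂ) :
    ∫ x : ℝ, cexp (-b * (x - c) ^ 2) = (π / b) ^ (1 / 2 : ℂ) := by
  have hb₀ : b ≠ 0 := by rintro rfl; simp at hb
  have := integral_cexp_quadratic (b := -b) (by simpa using hb) (2 * b * c) (-b * c ^ 2)
  rw [neg_neg, show -b * c ^ 2 - (2 * b * c) ^ 2 / (4 * -b) = 0 by field_simp; ring,
    Complex.exp_zero, mul_one] at this
  rw [← this]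
  congr 1 with x
  congr 1
  ring

theorem integral_one_sub_mul_sq_mul_cexp_neg_mul_sq_sub {b : ℂ} (hb : 0 < b.re) (c : ℂ) :
    ∫ x : ℝ, (1 - 2 * b * x ^ 2) * cexp (-b * (x - c) ^ 2) =
      -2 * b * c ^ 2 * (π / b) ^ (1 / 2 : ℂ) := by
  have hmom := integrable_pow_mul_cexp_neg_mul_sq_sub hb c
  have hprim (x : ℝ) : HasDerivAt (fun x : ℝ => (x + c) * cexp (-b * (x - c) ^ 2))
      ((1 - 2 * b * x ^ 2) * cexp (-b * (x - c) ^ 2) +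
        2 * b * c ^ 2 * cexp (-b * (x - c) ^ 2)) x := by
    have hlin : HasDerivAt (fun x : ℝ => (x : ℂ) + c) 1 x := by
      simpa using (hasDerivAt_id x).ofReal_comp.add_const c
    exact (hlin.mul (hasDerivAt_cexp_neg_mul_sq_sub b c x)).congr_deriv (by ring)
  have hprim_int : Integrable fun x : ℝ => (x + c) * cexp (-b * (x - c) ^ 2) :=
    ((hmom 1).add ((hmom 0).const_mul c)).congr (ae_of_all _ fun x => by simp only [Pi.add_apply, pow_one, pow_zero, one_mul]; ring)
  have hmain_int : Integrable fun x : ℝ => (1 - 2 * b * x ^ 2) * cexp (-b * (x - c) ^ 2) :=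
    ((hmom 0).sub ((hmom 2).const_mul (2 * b))).congr (ae_of_all _ fun x => by simp only [Pi.sub_apply, pow_zero, one_mul]; ring)
  have hgauss_int : Integrable fun x : ℝ => 2 * b * c ^ 2 * cexp (-b * (x - c) ^ 2) := by
    simpa using (hmom 0).const_mul (2 * b * c ^ 2)
  have hzero := integral_eq_zero_of_hasDerivAt_of_integrable hprim (hmain_int.add hgauss_int)
    hprim_int
  rw [integral_add hmain_int hgauss_int, integral_const_mul,
    integral_cexp_neg_mul_sq_sub hb] at hzero
  linear_combination hzero

theorem cpow_one_half_pi_div_ofReal {a : ℝ} (ha : 0 < a) :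
    ((π : ℂ) / a) ^ (1 / 2 : ℂ) = (√(π / a) : ℝ) := by
  rw [Real.sqrt_eq_rpow, ofReal_cpow (by positivity), ofReal_div]
  norm_num

/-- The complex Gaussian moment integral from Lemma on the integral approximation:
`∫ (1/σ³ − ζ²/(2σ⁵)) exp(−(ζ/(2σ) − i/Q)²) dζ = 4√π/(σ²Q²)`. -/
theorem complex_gaussian_moment_integral
    (σ Q : ℝ) (hσ : 0 < σ) (hQ : Q ≠ 0) :
    (∫ ζ : ℝ, (((1 / σ ^ 3 - ζ ^ 2 / (2 * σ ^ 5) : ℝ)) : ℂ) *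
        Complex.exp (-((ζ : ℂ) / (2 * (σ : ℂ)) - Complex.I / (Q : ℂ)) ^ 2)) =
      ((4 * Real.sqrt Real.pi / (σ ^ 2 * Q ^ 2) : ℝ) : ℂ) := by
  have hσ₀ : (σ : ℂ) ≠ 0 := by exact_mod_cast hσ.ne'
  have hQ₀ : (Q : ℂ) ≠ 0 := by exact_mod_cast hQ
  set a : ℝ := 1 / (4 * σ ^ 2)
  have ha : 0 < a := by positivity
  have hrewrite (ζ : ℝ) : (((1 / σ ^ 3 - ζ ^ 2 / (2 * σ ^ 5) : ℝ)) : ℂ) *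
      cexp (-((ζ : ℂ) / (2 * (σ : ℂ)) - I / (Q : ℂ)) ^ 2) =
      1 / (σ : ℂ) ^ 3 * ((1 - 2 * a * ζ ^ 2) * cexp (-a * (ζ - 2 * σ * I / Q) ^ 2)) := by
    have hexp : -((ζ : ℂ) / (2 * (σ : ℂ)) - I / (Q : ℂ)) ^ 2 =
        -a * (ζ - 2 * σ * I / Q) ^ 2 := by
      simp only [a]; push_cast; field_simp; ring
    rw [hexp]; simp only [a]; push_cast; field_simp; ring
  have hsqrt : √(π / a) = 2 * σ * √π := by
    rw [show π / a = (2 * σ) ^ 2 * π by simp only [a]; field_simp; ring,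
      Real.sqrt_mul (by positivity), Real.sqrt_sq (by positivity)]
  simp_rw [hrewrite]
  rw [integral_const_mul, integral_one_sub_mul_sq_mul_cexp_neg_mul_sq_sub (by simpa using ha),
    cpow_one_half_pi_div_ofReal ha, hsqrt]
  simp only [a]
  push_cast
  field_simp
  linear_combination (-16 : ℂ) * I_sq
end

section
/- Let K ∈ ℂ, σ > 0, and Θ₀, κ ∈ ℝ. Let k_min < k_max be real numbers and set k̄ = (k_max + k_min)/2 and δ = (k_max − k_min)/2. Then (1/√(2π)) ∫_{k_min}^{k_max} K k₀² e^{−k₀² σ²} cos(k₀ Θ₀) e^{−i k₀ κ} dk₀ = (K δ / (2π)) ∫_ℝ [ (2σ²)^{−3/2} − (2σ²)^{−1/2} ζ²/(4σ⁴) ] e^{−ζ²/(4σ²)} ( sinc(δ(κ − Θ₀ − ζ)) e^{−i k̄ (κ − Θ₀ − ζ)} + sinc(δ(κ + Θ₀ − ζ)) e^{−i k̄ (κ + Θ₀ − ζ)} ) dζ. -/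
/-!
Both sides are one double integral over `[kmin, kmax] × ℝ`. Integrating first in `ζ`, the
kernel turns out to be the inverse Fourier transform of `√(2π) k² e^{-k²σ²}` (a complex
Gaussian integral, plus one integration by parts for the `ζ²` moment), and the two shifted
exponentials recombine into `2 cos(kΘ₀) e^{-ikκ}`: this is the left side. Integrating first in
`k`, each exponential `e^{-ika}` over `[k̄ - δ, k̄ + δ]` gives `2δ sinc(δa) e^{-ik̄a}`: this is
the right side. Fubini applies because the kernel is integrable and the `k`-range is bounded.
-/

open MeasureTheory

/-- The unnormalized sinc function, `sinc x = sin x / x` for `x ≠ 0` and `sinc 0 = 1`. -/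
noncomputable def sinc (x : ℝ) : ℝ := if x = 0 then 1 else Real.sin x / x

open Complex

lemma mul_sinc_mul (r : ℝ) {a : ℝ} (ha : a ≠ 0) : r * sinc (r * a) = Real.sin (r * a) / a := by
  rcases eq_or_ne r 0 with rfl | hr
  · simp
  · rw [sinc, if_neg (mul_ne_zero hr ha)]
    field_simp

lemma intervalIntegral_cexp_neg_I_mul (c r a : ℝ) :
    ∫ k in (c - r)..(c + r), cexp (-I * ↑(k * a)) =
      2 * r * sinc (r * a) * cexp (-I * ↑(c * a)) := by
  rcases eq_or_ne a 0 with rfl | ha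
  · simp [sinc]; ring
  have hc : -I * a ≠ 0 := by simp [ha]
  have hsinc : (r : ℂ) * sinc (r * a) = Complex.sin (r * a) / a := by
    rw [← ofReal_mul, mul_sinc_mul r ha]; push_cast; rfl
  simp_rw [ofReal_mul, ← mul_assoc, mul_right_comm _ _ (a : ℂ)]
  rw [integral_exp_mul_complex hc, mul_assoc 2, mul_assoc 2, hsinc, Complex.sin]
  push_cast
  rw [sub_eq_add_neg (c : ℂ), mul_add, mul_add, Complex.exp_add, Complex.exp_add]
  field_simp
  ring_nf
  rw [I_sq]
  ring

lemma cexp_neg_I_mul_add_cexp_neg_I_mul (k x θ ζ : ℝ) :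
    cexp (-I * ↑(k * (x - θ - ζ))) + cexp (-I * ↑(k * (x + θ - ζ))) =
      2 * Real.cos (k * θ) * cexp (-I * ↑(k * x)) * cexp (I * k * ζ) := by
  rw [ofReal_cos, Complex.cos, mul_div_cancel₀ _ two_ne_zero, add_mul, add_mul]
  simp only [← Complex.exp_add]
  push_cast
  ring_nf

lemma two_mul_sinc_add_sinc_eq_intervalIntegral (c r x θ ζ : ℝ) :
    2 * r * (sinc (r * (x - θ - ζ)) * cexp (-I * ↑(c * (x - θ - ζ))) +
        sinc (r * (x + θ - ζ)) * cexp (-I * ↑(c * (x + θ - ζ)))) =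
      ∫ k in (c - r)..(c + r),
        2 * Real.cos (k * θ) * cexp (-I * ↑(k * x)) * cexp (I * k * ζ) := by
  have hint (a : ℝ) :
      IntervalIntegrable (fun k : ℝ ↦ cexp (-I * ↑(k * a))) volume (c - r) (c + r) :=
    (by fun_prop : Continuous _).intervalIntegrable _ _
  simp_rw [← cexp_neg_I_mul_add_cexp_neg_I_mul, intervalIntegral.integral_add (hint _) (hint _),
    intervalIntegral_cexp_neg_I_mul]
  ring

lemma norm_cexp_I_mul_mul (k ζ : ℝ) : ‖cexp (I * k * ζ)‖ = 1 := by
  rw [mul_assoc, ← ofReal_mul, norm_exp_I_mul_ofReal]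

lemma integral_mul_integral_cexp_comm {μ ν : Measure ℝ} [SFinite μ] [SFinite ν] {g φ : ℝ → ℂ}
    (hg : Integrable g μ) (hφ : Integrable φ ν) :
    ∫ ζ, g ζ * ∫ k, φ k * cexp (I * k * ζ) ∂ν ∂μ =
      ∫ k, φ k * ∫ ζ, g ζ * cexp (I * k * ζ) ∂μ ∂ν := by
  have hprod :
      Integrable (fun p : ℝ × ℝ ↦ g p.1 * (φ p.2 * cexp (I * p.2 * p.1))) (μ.prod ν) := by
    refine (hg.mul_prod hφ).mono ?_ (ae_of_all _ fun p ↦ ?_)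
    · exact hg.1.comp_fst.mul
        (hφ.1.comp_snd.mul (by fun_prop : Continuous _).aestronglyMeasurable)
    · simp only [norm_mul, norm_cexp_I_mul_mul, mul_one, le_refl]
  calc ∫ ζ, g ζ * ∫ k, φ k * cexp (I * k * ζ) ∂ν ∂μ
      = ∫ ζ, ∫ k, g ζ * (φ k * cexp (I * k * ζ)) ∂ν ∂μ := by simp_rw [integral_const_mul]
    _ = ∫ k, ∫ ζ, g ζ * (φ k * cexp (I * k * ζ)) ∂μ ∂ν := integral_integral_swap hprod
    _ = ∫ k, φ k * ∫ ζ, g ζ * cexp (I * k * ζ) ∂μ ∂ν := by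
      simp_rw [← integral_const_mul, mul_left_comm (φ _)]

lemma integrable_pow_mul_cexp_quadratic {b : ℂ} (hb : b.re < 0) (t : ℝ) (n : ℕ) :
    Integrable fun x : ℝ ↦ (x : ℂ) ^ n * cexp (b * x ^ 2 + I * t * x) := by
  have hdom : Integrable fun x : ℝ ↦ |x ^ (n : ℝ) * Real.exp (-(-b.re) * x ^ 2)| :=
    (integrable_rpow_mul_exp_neg_mul_sq (neg_pos.2 hb) (by linarith [n.cast_nonneg (α := ℝ)])).abs
  refine hdom.mono' (by fun_prop) (ae_of_all _ fun x ↦ ?_)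
  have hre : (b * x ^ 2 + I * t * x).re = b.re * x ^ 2 := by
    simp [← ofReal_pow]
  rw [norm_mul, norm_pow, norm_real, Real.norm_eq_abs, norm_exp, hre, abs_mul, Real.rpow_natCast,
    abs_pow, abs_of_pos (Real.exp_pos _), neg_neg]

lemma integral_sq_mul_cexp_quadratic {b : ℂ} (hb : b.re < 0) (t : ℝ) :
    ∫ x : ℝ, (x : ℂ) ^ 2 * cexp (b * x ^ 2 + I * t * x) =
      ((I * t) ^ 2 / (4 * b ^ 2) - 1 / (2 * b)) * ∫ x : ℝ, cexp (b * x ^ 2 + I * t * x) := by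
  have hb0 : b ≠ 0 := by rintro rfl; simp at hb
  set c : ℂ := I * t
  set m := c ^ 2 / (4 * b ^ 2) - 1 / (2 * b)
  set E : ℝ → ℂ := fun x ↦ cexp (b * x ^ 2 + c * x)
  have hE (n : ℕ) : Integrable fun x : ℝ ↦ (x : ℂ) ^ n * E x :=
    integrable_pow_mul_cexp_quadratic hb t n
  have hE0 : Integrable E := by simpa using hE 0
  have hderiv (x : ℝ) : HasDerivAt (fun x : ℝ ↦ ((x : ℂ) / (2 * b) - c / (4 * b ^ 2)) * E x)
      (((x : ℂ) ^ 2 * E x) - m * E x) x := by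
    have hlin : HasDerivAt (fun z : ℂ ↦ z / (2 * b) - c / (4 * b ^ 2)) (1 / (2 * b)) (x : ℂ) := by
      simpa using ((hasDerivAt_id (x : ℂ)).div_const (2 * b)).sub_const (c / (4 * b ^ 2))
    have hquad : HasDerivAt (fun z : ℂ ↦ b * z ^ 2 + c * z) (2 * b * x + c) (x : ℂ) := by
      refine (((hasDerivAt_pow 2 _).const_mul b).add
        ((hasDerivAt_id _).const_mul c)).congr_deriv ?_
      norm_num
      ring
    refine (hlin.mul hquad.cexp).comp_ofReal.congr_deriv ?_
    simp only [E, m]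
    field_simp
    ring
  have hanti : Integrable fun x : ℝ ↦ ((x : ℂ) / (2 * b) - c / (4 * b ^ 2)) * E x :=
    (((hE 1).div_const (2 * b)).sub (hE0.const_mul (c / (4 * b ^ 2)))).congr
      (ae_of_all _ fun x ↦ by simp only [Pi.sub_apply, pow_one]; ring)
  have hzero := integral_eq_zero_of_hasDerivAt_of_integrable hderiv
    ((hE 2).sub (hE0.const_mul m)) hanti
  rw [integral_sub (hE 2) (hE0.const_mul m), integral_const_mul] at hzero
  exact sub_eq_zero.1 hzero

noncomputable def measurementKernel (σ ζ : ℝ) : ℝ :=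
  ((2 * σ ^ 2) ^ (-(3 : ℝ) / 2) - (2 * σ ^ 2) ^ (-(1 : ℝ) / 2) * ζ ^ 2 / (4 * σ ^ 4)) *
    Real.exp (-ζ ^ 2 / (4 * σ ^ 2))

lemma measurementKernel_mul_cexp (σ k ζ : ℝ) :
    (measurementKernel σ ζ : ℂ) * cexp (I * k * ζ) =
      ((2 * σ ^ 2) ^ (-(3 : ℝ) / 2) : ℝ) *
          cexp (((-(1 / (4 * σ ^ 2)) : ℝ) : ℂ) * ζ ^ 2 + I * k * ζ) -
        ((2 * σ ^ 2) ^ (-(1 : ℝ) / 2) / (4 * σ ^ 4) : ℝ) *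
          ((ζ : ℂ) ^ 2 * cexp (((-(1 / (4 * σ ^ 2)) : ℝ) : ℂ) * ζ ^ 2 + I * k * ζ)) := by
  simp only [measurementKernel, Complex.exp_add]
  push_cast
  ring_nf

lemma integrable_measurementKernel_mul_cexp {σ : ℝ} (hσ : σ ≠ 0) (k : ℝ) :
    Integrable fun ζ : ℝ ↦ (measurementKernel σ ζ : ℂ) * cexp (I * k * ζ) := by
  have hb : (((-(1 / (4 * σ ^ 2)) : ℝ) : ℂ)).re < 0 := by
    rw [ofReal_re, neg_lt_zero]; positivity
  have hE0 := integrable_pow_mul_cexp_quadratic hb k 0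
  simp only [pow_zero, one_mul] at hE0
  simp_rw [measurementKernel_mul_cexp]
  exact (hE0.const_mul _).sub ((integrable_pow_mul_cexp_quadratic hb k 2).const_mul _)

lemma integral_cexp_gaussian_mul_I {σ : ℝ} (hσ : σ ≠ 0) (k : ℝ) :
    ∫ ζ : ℝ, cexp (((-(1 / (4 * σ ^ 2)) : ℝ) : ℂ) * ζ ^ 2 + I * k * ζ) =
      (Real.sqrt (2 * Real.pi) * Real.sqrt (2 * σ ^ 2) : ℝ) * cexp (-(k ^ 2 * σ ^ 2 : ℝ)) := by
  have hb : (((-(1 / (4 * σ ^ 2)) : ℝ) : ℂ)).re < 0 := by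
    rw [ofReal_re, neg_lt_zero]; positivity
  have h := integral_cexp_quadratic hb (I * k) 0
  simp only [add_zero, zero_sub] at h
  rw [h]
  congr 1
  · have hπb : Real.pi / -(((-(1 / (4 * σ ^ 2)) : ℝ) : ℂ)) =
        ((2 * Real.pi * (2 * σ ^ 2) : ℝ) : ℂ) := by
      push_cast; field_simp; ring
    have hsqrt : Real.sqrt (2 * Real.pi) * Real.sqrt (2 * σ ^ 2) =
        (2 * Real.pi * (2 * σ ^ 2)) ^ (1 / 2 : ℝ) := by
      rw [← Real.sqrt_eq_rpow, Real.sqrt_mul' (2 * Real.pi) (by positivity)]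
    rw [hπb, hsqrt, ofReal_cpow (by positivity)]
    push_cast
    rfl
  · congr 1
    simp only [mul_pow, I_sq]
    push_cast
    field_simp

lemma integral_measurementKernel_mul_cexp {σ : ℝ} (hσ : σ ≠ 0) (k : ℝ) :
    ∫ ζ : ℝ, (measurementKernel σ ζ : ℂ) * cexp (I * k * ζ) =
      Real.sqrt (2 * Real.pi) * k ^ 2 * cexp (-(k ^ 2 * σ ^ 2 : ℝ)) := by
  set b : ℂ := ((-(1 / (4 * σ ^ 2)) : ℝ) : ℂ)
  have hb : b.re < 0 := by rw [ofReal_re, neg_lt_zero]; positivity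
  have hE0 := integrable_pow_mul_cexp_quadratic hb k 0
  simp only [pow_zero, one_mul] at hE0
  set s := Real.sqrt (2 * σ ^ 2)
  have hs : 0 < s := Real.sqrt_pos.2 (by positivity)
  have hrpow : (2 * σ ^ 2) ^ (-(1 : ℝ) / 2) = s⁻¹ := by
    rw [neg_div, Real.rpow_neg (by positivity), ← Real.sqrt_eq_rpow]
  have hrpow' : (2 * σ ^ 2) ^ (-(3 : ℝ) / 2) = s⁻¹ / (2 * σ ^ 2) := by
    rw [← hrpow, ← Real.rpow_sub_one (by positivity)]; norm_num
  simp_rw [measurementKernel_mul_cexp]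
  rw [integral_sub (hE0.const_mul _) ((integrable_pow_mul_cexp_quadratic hb k 2).const_mul _),
    integral_const_mul, integral_const_mul, integral_sq_mul_cexp_quadratic hb,
    integral_cexp_gaussian_mul_I hσ]
  have hsC : (s : ℂ) ≠ 0 := ofReal_ne_zero.2 hs.ne'
  have hσC : (σ : ℂ) ≠ 0 := ofReal_ne_zero.2 hσ
  simp only [b, hrpow, hrpow']
  push_cast
  simp only [mul_pow, I_sq]
  field_simp
  ring

/-- The band-limited Fourier transform of the measurement function
`M(k₀) = K k₀² e^{−k₀²σ²} cos(k₀Θ₀)` can be written as a convolution of a Gaussian-type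
kernel with shifted sinc functions. -/
theorem measurement_fourier_convolution
    (K : ℂ) (σ : ℝ) (hσ : 0 < σ) (Θ₀ κ : ℝ)
    (kmin kmax : ℝ) (hkk : kmin < kmax)
    (kbar δ : ℝ) (hkbar : kbar = (kmax + kmin) / 2) (hδ : δ = (kmax - kmin) / 2) :
    ((1 / Real.sqrt (2 * Real.pi) : ℝ) : ℂ) *
      (∫ k₀ in kmin..kmax, K * (k₀ : ℂ) ^ 2 *
        Complex.exp (-((k₀ ^ 2 * σ ^ 2 : ℝ) : ℂ)) * ((Real.cos (k₀ * Θ₀) : ℝ) : ℂ) *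
        Complex.exp (-Complex.I * ((k₀ * κ : ℝ) : ℂ))) =
    (K * (δ : ℂ) / (2 * (Real.pi : ℂ))) *
      ∫ ζ : ℝ,
        (((2 * σ ^ 2) ^ (-(3 : ℝ) / 2) -
            (2 * σ ^ 2) ^ (-(1 : ℝ) / 2) * ζ ^ 2 / (4 * σ ^ 4) : ℝ) : ℂ) *
        ((Real.exp (-ζ ^ 2 / (4 * σ ^ 2)) : ℝ) : ℂ) *
        (((sinc (δ * (κ - Θ₀ - ζ)) : ℝ) : ℂ) *
            Complex.exp (-Complex.I * ((kbar * (κ - Θ₀ - ζ) : ℝ) : ℂ)) +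
          ((sinc (δ * (κ + Θ₀ - ζ)) : ℝ) : ℂ) *
            Complex.exp (-Complex.I * ((kbar * (κ + Θ₀ - ζ) : ℝ) : ℂ))) := by
  obtain rfl : kmin = kbar - δ := by rw [hkbar, hδ]; ring
  obtain rfl : kmax = kbar + δ := by linarith
  have hδ0 : (δ : ℂ) ≠ 0 := ofReal_ne_zero.2 (by linarith)
  set φ : ℝ → ℂ := fun k ↦ 2 * Real.cos (k * Θ₀) * cexp (-I * ↑(k * κ))
  have hφ : IntegrableOn φ (Set.Ioc (kbar - δ) (kbar + δ)) :=
    (by fun_prop : Continuous φ).integrableOn_Ioc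
  have hsinc (ζ : ℝ) : (sinc (δ * (κ - Θ₀ - ζ)) : ℂ) * cexp (-I * ↑(kbar * (κ - Θ₀ - ζ))) +
      sinc (δ * (κ + Θ₀ - ζ)) * cexp (-I * ↑(kbar * (κ + Θ₀ - ζ))) =
      (2 * (δ : ℂ))⁻¹ * ∫ k in Set.Ioc (kbar - δ) (kbar + δ), φ k * cexp (I * k * ζ) := by
    rw [← intervalIntegral.integral_of_le (by linarith),
      ← two_mul_sinc_add_sinc_eq_intervalIntegral, inv_mul_cancel_left₀ (by simpa using hδ0)]
  simp_rw [hsinc, ← ofReal_mul, ← measurementKernel.eq_1, mul_left_comm _ (2 * (δ : ℂ))⁻¹]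
  rw [integral_const_mul, integral_mul_integral_cexp_comm
      (by simpa using integrable_measurementKernel_mul_cexp hσ.ne' 0) hφ,
    intervalIntegral.integral_of_le (by linarith)]
  simp_rw [integral_measurementKernel_mul_cexp hσ.ne', ← integral_const_mul]
  have hsqrt : ((Real.sqrt (2 * Real.pi) : ℝ) : ℂ) ≠ 0 := ofReal_ne_zero.2 (by positivity)
  have hsq : ((Real.sqrt (2 * Real.pi) : ℝ) : ℂ) ^ 2 = 2 * Real.pi := by
    rw [← ofReal_pow, Real.sq_sqrt (by positivity)]; push_cast; ring
  congr 1 with k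
  simp only [φ]
  push_cast
  field_simp
  rw [hsq]
  ring
end
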